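/- For P = σ·P₂ (σ a single letter) and context C: type(1, P, C) = L(σ) ∩ (C / L(P₂)) and type(2n, P, C) = type(n, P₂, L(σ) \ C), where / and \ are right and left language quotients. -/
import Mathlib


/-- Regular expression patterns over an alphabet `A`. -/
inductive Pat (A : Type) : Type
  | eps : Pat A
  | ch : A → Pat A
  | plus : Pat A → Pat A → Pat A
  | cat : Pat A → Pat A → Pat A
  | star : Pat A → Pat A

/-- The language of a pattern (the usual regular-expression language). -/
def Pat.lang {A : Type} : Pat A → Language A
  | .eps => 1
  | .ch a => {[a]}
  | .plus p q => p.lang + q.lang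
  | .cat p q => p.lang * q.lang
  | .star p => KStar.kstar p.lang

/-- Node addresses in the syntax tree of a pattern: `[]` is the root, `1 :: n`
addresses node `n` in the left child, `2 :: n` in the right child. -/
abbrev Node := List ℕ

/-- Bindable nodes: nodes of the syntax tree having no `*`-labeled ancestor
(the root is always bindable; below a `star` nothing is bindable). -/
def Pat.Bindable {A : Type} : Pat A → Node → Prop
  | _, [] => True
  | .plus p _, 1 :: n => p.Bindable n
  | .plus _ q, 2 :: n => q.Bindable n
  | .cat p _, 1 :: n => p.Bindable n
  | .cat _ q, 2 :: n => q.Bindable n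
  | _, _ => False

/-- Associations: a map from node addresses to a matched subword (`some w`) or
`⊥` (`none`). -/
abbrev Assoc (A : Type) := Node → Option (List A)

/-- The association `[λ → w]` binding only the root. -/
def single {A : Type} (w : List A) : Assoc A :=
  fun n => if n = [] then some w else none

/-- `V + P₂`: push the associations of `V` into the left branch of a
disjunction; all nodes of the right branch get `⊥`. -/
def orL {A : Type} (V : Assoc A) : Assoc A
  | [] => V []
  | 1 :: m => V m
  | _ => none

/-- `P₁ + V`: push the associations of `V` into the right branch of a
disjunction; all nodes of the left branch get `⊥`. -/
def orR {A : Type} (V : Assoc A) : Assoc A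
  | [] => V []
  | 2 :: m => V m
  | _ => none

/-- `V₁ · V₂`: the association for a concatenation node. -/
def catA {A : Type} (V₁ V₂ : Assoc A) : Assoc A
  | [] => match V₁ [], V₂ [] with
          | some u, some v => some (u ++ v)
          | _, _ => none
  | 1 :: m => V₁ m
  | 2 :: m => V₂ m
  | _ => none

mutual
/-- The matching relation `w ⊢ P ⇒ V` of the paper's Figure 2, with the
first-match policy for `+` (rules Or2/COr2) and the longest-match policy for
Kleene star in a concatenation (rule CKleene). -/
inductive Match {A : Type} : List A → Pat A → Assoc A → Prop
  | empty : Match [] .eps (single [])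
  | lab (a : A) : Match [a] (.ch a) (single [a])
  | kleeneEmpty (P : Pat A) : Match [] (.star P) (single [])
  | kleeneClosure {w₁ w₂ : List A} {P : Pat A} {V₁ V₂ : Assoc A} :
      Match w₁ P V₁ → Match w₂ (.star P) V₂ → w₁ ≠ [] →
      Match (w₁ ++ w₂) (.star P) (single (w₁ ++ w₂))
  | or1 {w : List A} {P₁ P₂ : Pat A} {V : Assoc A} :
      Match w P₁ V → Match w (.plus P₁ P₂) (orL V)
  | or2 {w : List A} {P₁ P₂ : Pat A} {V : Assoc A} :
      Match w P₂ V → w ∉ P₁.lang → Match w (.plus P₁ P₂) (orR V)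
  | celem {w₁ w₂ : List A} {P₁ P₂ : Pat A} {V₁ V₂ : Assoc A} :
      CMatch w₁ w₂ P₁ P₂ V₁ V₂ → Match (w₁ ++ w₂) (.cat P₁ P₂) (catA V₁ V₂)

/-- The auxiliary relation `(w₁, w₂) ⊢ P₁ · P₂ ⇒ (V₁, V₂)`: when matching
`w₁w₂` against `P₁ · P₂`, pattern `P₁` matches `w₁` yielding `V₁` and `P₂`
matches `w₂` yielding `V₂`. -/
inductive CMatch {A : Type} : List A → List A → Pat A → Pat A → Assoc A → Assoc A → Prop
  | cempty {w : List A} {P : Pat A} {V₂ : Assoc A} :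
      Match w P V₂ → CMatch [] w .eps P (single []) V₂
  | clab {a : A} {w : List A} {P : Pat A} {V₁ V₂ : Assoc A} :
      Match [a] (.ch a) V₁ → Match w P V₂ → CMatch [a] w (.ch a) P V₁ V₂
  | cor1 {w₁ w₂ : List A} {P₁ P₂ P₃ : Pat A} {V₁ V₂ : Assoc A} :
      CMatch w₁ w₂ P₁ P₃ V₁ V₂ →
      CMatch w₁ w₂ (.plus P₁ P₂) P₃ (orL V₁) V₂
  | cor2 {w₁ w₂ : List A} {P₁ P₂ P₃ : Pat A} {V₁ V₂ : Assoc A} :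
      CMatch w₁ w₂ P₂ P₃ V₁ V₂ → w₁ ++ w₂ ∉ (Pat.cat P₁ P₃).lang →
      CMatch w₁ w₂ (.plus P₁ P₂) P₃ (orR V₁) V₂
  | ccon {w₁ w₂ w₃ : List A} {P₁ P₂ P₃ : Pat A} {V₁ V₂ V₃ W : Assoc A} :
      CMatch w₁ (w₂ ++ w₃) P₁ (.cat P₂ P₃) V₁ W →
      CMatch w₂ w₃ P₂ P₃ V₂ V₃ →
      CMatch (w₁ ++ w₂) w₃ (.cat P₁ P₂) P₃ (catA V₁ V₂) V₃
  | ckleene {w₁ w₂ : List A} {P₁ P₂ : Pat A} {V₁ V₂ : Assoc A} :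
      Match w₁ (.star P₁) V₁ → Match w₂ P₂ V₂ →
      (¬ ∃ w₃ w₄, w₃ ≠ [] ∧ w₂ = w₃ ++ w₄ ∧
        w₁ ++ w₃ ∈ (Pat.star P₁).lang ∧ w₄ ∈ P₂.lang) →
      CMatch w₁ w₂ (.star P₁) P₂ V₁ V₂
end

/-- The type of node `n` of pattern `P` relative to a context language `C`:
all subwords that `n` can be associated with when matching a word of `C`
against `P`. -/
def typeOf {A : Type} (n : Node) (P : Pat A) (C : Set (List A)) : Set (List A) :=
  {w | ∃ w' ∈ C, ∃ V, Match w' P V ∧ V n = some w}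

theorem match_sound {A : Type} {w : List A} {P : Pat A} {V : Assoc A}
    (h : Match w P V) : w ∈ P.lang := by
  refine Match.rec (motive_1 := fun w P V _ => w ∈ P.lang)
    (motive_2 := fun w₁ w₂ P₁ P₂ _ _ _ => w₁ ∈ P₁.lang ∧ w₂ ∈ P₂.lang)
    ?_ ?_ ?_ ?_ ?_ ?_ ?_ ?_ ?_ ?_ ?_ ?_ ?_ h
  · simp [Pat.lang]
  · intro a; exact rfl
  · intro P
    show ([] : List A) ∈ KStar.kstar P.lang
    rw [Language.mem_kstar]; exact ⟨[], by simp, by simp⟩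
  · intro w₁ w₂ P V₁ V₂ h1 h2 hne ih1 ih2
    show w₁ ++ w₂ ∈ KStar.kstar P.lang
    have ih2' : w₂ ∈ KStar.kstar P.lang := ih2
    rw [Language.mem_kstar] at ih2' ⊢
    obtain ⟨L, rfl, hL⟩ := ih2'
    refine ⟨w₁ :: L, by simp, ?_⟩
    intro y hy
    rcases List.mem_cons.mp hy with rfl | hy
    · exact ih1
    · exact hL y hy
  · intro w P₁ P₂ V h ih
    exact (Language.mem_add _ _ _).mpr (Or.inl ih)
  · intro w P₁ P₂ V h hn ih
    exact (Language.mem_add _ _ _).mpr (Or.inr ih)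
  · intro w₁ w₂ P₁ P₂ V₁ V₂ h ih
    exact Language.mem_mul.mpr ⟨w₁, ih.1, w₂, ih.2, rfl⟩
  · intro w P V₂ h ih
    exact ⟨by simp [Pat.lang], ih⟩
  · intro a w P V₁ V₂ h1 h2 ih1 ih2
    exact ⟨rfl, ih2⟩
  · intro w₁ w₂ P₁ P₂ P₃ V₁ V₂ h ih
    exact ⟨(Language.mem_add _ _ _).mpr (Or.inl ih.1), ih.2⟩
  · intro w₁ w₂ P₁ P₂ P₃ V₁ V₂ h hn ih
    exact ⟨(Language.mem_add _ _ _).mpr (Or.inr ih.1), ih.2⟩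
  · intro w₁ w₂ w₃ P₁ P₂ P₃ V₁ V₂ V₃ W h1 h2 ih1 ih2
    exact ⟨Language.mem_mul.mpr ⟨w₁, ih1.1, w₂, ih2.1, rfl⟩, ih2.2⟩
  · intro w₁ w₂ P₁ P₂ V₁ V₂ h1 h2 hn ih1 ih2
    exact ⟨ih1, ih2⟩

theorem cmatch_sound {A : Type} {w₁ w₂ : List A} {P₁ P₂ : Pat A} {V₁ V₂ : Assoc A}
    (h : CMatch w₁ w₂ P₁ P₂ V₁ V₂) : w₁ ∈ P₁.lang ∧ w₂ ∈ P₂.lang := by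
  refine CMatch.rec (motive_1 := fun w P V _ => w ∈ P.lang)
    (motive_2 := fun w₁ w₂ P₁ P₂ _ _ _ => w₁ ∈ P₁.lang ∧ w₂ ∈ P₂.lang)
    ?_ ?_ ?_ ?_ ?_ ?_ ?_ ?_ ?_ ?_ ?_ ?_ ?_ h
  · simp [Pat.lang]
  · intro a; exact rfl
  · intro P
    show ([] : List A) ∈ KStar.kstar P.lang
    rw [Language.mem_kstar]; exact ⟨[], by simp, by simp⟩
  · intro u₁ u₂ P V₁' V₂' h1 h2 hne ih1 ih2
    show u₁ ++ u₂ ∈ KStar.kstar P.lang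
    have ih2' : u₂ ∈ KStar.kstar P.lang := ih2
    rw [Language.mem_kstar] at ih2' ⊢
    obtain ⟨L, rfl, hL⟩ := ih2'
    refine ⟨u₁ :: L, by simp, ?_⟩
    intro y hy
    rcases List.mem_cons.mp hy with rfl | hy
    · exact ih1
    · exact hL y hy
  · intro w P₁ P₂ V h ih
    exact (Language.mem_add _ _ _).mpr (Or.inl ih)
  · intro w P₁ P₂ V h hn ih
    exact (Language.mem_add _ _ _).mpr (Or.inr ih)
  · intro u₁ u₂ P₁ P₂ V₁' V₂' h ih
    exact Language.mem_mul.mpr ⟨u₁, ih.1, u₂, ih.2, rfl⟩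
  · intro w P V₂' h ih
    exact ⟨by simp [Pat.lang], ih⟩
  · intro a w P V₁' V₂' h1 h2 ih1 ih2
    exact ⟨rfl, ih2⟩
  · intro u₁ u₂ P₁ P₂ P₃ V₁' V₂' h ih
    exact ⟨(Language.mem_add _ _ _).mpr (Or.inl ih.1), ih.2⟩
  · intro u₁ u₂ P₁ P₂ P₃ V₁' V₂' h hn ih
    exact ⟨(Language.mem_add _ _ _).mpr (Or.inr ih.1), ih.2⟩
  · intro u₁ u₂ u₃ P₁ P₂ P₃ V₁' V₂' V₃ W h1 h2 ih1 ih2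
    exact ⟨Language.mem_mul.mpr ⟨u₁, ih1.1, u₂, ih2.1, rfl⟩, ih2.2⟩
  · intro u₁ u₂ P₁ P₂ V₁' V₂' h1 h2 hn ih1 ih2
    exact ⟨ih1, ih2⟩

theorem star_match {A : Type} (Q : Pat A) (hQ : ∀ w ∈ Q.lang, ∃ V, Match w Q V) :
    ∀ w ∈ (Pat.star Q).lang, ∃ V, Match w (Pat.star Q) V := by
  have key : ∀ (S : List (List A)), (∀ y ∈ S, y ∈ Q.lang ∧ y ≠ []) →
      ∃ V, Match S.flatten (Pat.star Q) V := by
    intro S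
    induction S with
    | nil => intro _; exact ⟨_, Match.kleeneEmpty Q⟩
    | cons y S ih =>
      intro h
      obtain ⟨V₁, h₁⟩ := hQ y (h y (by simp)).1
      obtain ⟨V₂, h₂⟩ := ih (fun z hz => h z (by simp [hz]))
      exact ⟨_, Match.kleeneClosure h₁ h₂ (h y (by simp)).2⟩
  intro w hw
  have hw' : w ∈ KStar.kstar Q.lang := hw
  rw [Language.kstar_def_nonempty] at hw'
  obtain ⟨S, rfl, hS⟩ := hw'
  exact key S hS

theorem cmatch_star {A : Type} (Q P₂ : Pat A)
    (hs : ∀ w ∈ (Pat.star Q).lang, ∃ V, Match w (Pat.star Q) V)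
    (h₂ : ∀ w ∈ P₂.lang, ∃ V, Match w P₂ V) :
    ∀ w ∈ (Pat.cat (Pat.star Q) P₂).lang,
      ∃ u v V₁ V₂, w = u ++ v ∧ CMatch u v (Pat.star Q) P₂ V₁ V₂ := by
  classical
  intro w hw
  have hw' : w ∈ (Pat.star Q).lang * P₂.lang := hw
  rw [Language.mem_mul] at hw'
  obtain ⟨u, hu, v, hv, huv⟩ := hw'
  set Pk : ℕ → Prop := fun k => w.take k ∈ (Pat.star Q).lang ∧ w.drop k ∈ P₂.lang with hPk
  set k := Nat.findGreatest Pk w.length with hkdef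
  have hule : u.length ≤ w.length := by rw [← huv]; simp
  have hPu : Pk u.length := by
    constructor
    · rw [← huv, List.take_left]; exact hu
    · rw [← huv, List.drop_left]; exact hv
  have hk : Pk k := Nat.findGreatest_spec hule hPu
  have hkle : k ≤ w.length := Nat.findGreatest_le _
  obtain ⟨VV₁, hm1⟩ := hs _ hk.1
  obtain ⟨VV₂, hm2⟩ := h₂ _ hk.2
  refine ⟨w.take k, w.drop k, VV₁, VV₂, (List.take_append_drop k w).symm, ?_⟩
  refine CMatch.ckleene hm1 hm2 ?_
  rintro ⟨w₃, w₄, h3ne, hsplit, hmem, h4⟩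
  have hlen : (w.take k).length = k := by simp [hkle]
  have hw1 : w = (w.take k ++ w₃) ++ w₄ := by
    conv_lhs => rw [← List.take_append_drop k w]
    rw [hsplit, List.append_assoc]
  have hPm : Pk (k + w₃.length) := by
    have htk : w.take (k + w₃.length) = w.take k ++ w₃ := by
      conv_lhs => rw [hw1]
      have : k + w₃.length = (w.take k ++ w₃).length := by simp [hlen]
      rw [this, List.take_left]
    have hdk : w.drop (k + w₃.length) = w₄ := by
      conv_lhs => rw [hw1]
      have : k + w₃.length = (w.take k ++ w₃).length := by simp [hlen]
      rw [this, List.drop_left]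
    exact ⟨htk ▸ hmem, hdk ▸ h4⟩
  have hmle : k + w₃.length ≤ w.length := by
    conv_rhs => rw [hw1]
    simp [hlen]
  have hklt : k < k + w₃.length := by
    have : 0 < w₃.length := List.length_pos_iff.mpr h3ne
    omega
  exact Nat.findGreatest_is_greatest hklt hmle hPm

@[simp] def Pat.size {A : Type} : Pat A → ℕ
  | .eps => 1
  | .ch _ => 1
  | .plus p q => p.size + q.size + 1
  | .cat p q => p.size + q.size + 1
  | .star p => p.size + 1

mutual

theorem exists_match {A : Type} (P : Pat A) (w : List A) (hw : w ∈ P.lang) :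
    ∃ V, Match w P V := by
  cases P with
  | eps =>
    have : w = [] := hw
    exact this ▸ ⟨_, Match.empty⟩
  | ch a =>
    have : w = [a] := hw
    exact this ▸ ⟨_, Match.lab a⟩
  | plus p q =>
    by_cases hp : w ∈ p.lang
    · obtain ⟨V, h⟩ := exists_match p w hp
      exact ⟨_, Match.or1 (P₂ := q) h⟩
    · have hq : w ∈ q.lang := ((Language.mem_add _ _ _).mp hw).resolve_left hp
      obtain ⟨V, h⟩ := exists_match q w hq
      exact ⟨_, Match.or2 h hp⟩
  | cat p q =>
    obtain ⟨u, v, V₁, V₂, heq, hc⟩ := exists_cmatch p q w hw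
    exact ⟨_, heq ▸ Match.celem hc⟩
  | star q =>
    exact star_match q (fun y hy => exists_match q y hy) w hw
termination_by (P.size, P.size)
decreasing_by all_goals (simp_wf; try subst_vars; rw [Prod.lex_iff]; simp only [Pat.size]; omega)

theorem exists_cmatch {A : Type} (P₁ P₂ : Pat A) (w : List A)
    (hw : w ∈ (Pat.cat P₁ P₂).lang) :
    ∃ u v V₁ V₂, w = u ++ v ∧ CMatch u v P₁ P₂ V₁ V₂ := by
  have hw' : w ∈ P₁.lang * P₂.lang := hw
  rw [Language.mem_mul] at hw'
  obtain ⟨u, hu, v, hv, huv⟩ := hw'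
  cases P₁ with
  | eps =>
    have hu0 : u = [] := hu
    obtain ⟨V₂, h₂⟩ := exists_match P₂ v hv
    subst hu0
    exact ⟨[], v, _, _, huv.symm, CMatch.cempty h₂⟩
  | ch a =>
    have hu0 : u = [a] := hu
    obtain ⟨V₂, h₂⟩ := exists_match P₂ v hv
    subst hu0
    exact ⟨[a], v, _, _, huv.symm, CMatch.clab (Match.lab a) h₂⟩
  | plus p q =>
    subst huv
    by_cases hc : u ++ v ∈ (Pat.cat p P₂).lang
    · obtain ⟨u', v', V₁, V₂, heq, hcm⟩ := exists_cmatch p P₂ (u ++ v) hc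
      exact ⟨u', v', _, _, heq, CMatch.cor1 hcm⟩
    · have hu' : u ∈ q.lang := by
        rcases (Language.mem_add _ _ _).mp hu with h | h
        · exact absurd (Language.mem_mul.mpr ⟨u, h, v, hv, rfl⟩) hc
        · exact h
      obtain ⟨u', v', V₁, V₂, heq, hcm⟩ :=
        exists_cmatch q P₂ (u ++ v) (Language.mem_mul.mpr ⟨u, hu', v, hv, rfl⟩)
      exact ⟨u', v', _, _, heq, CMatch.cor2 hcm (heq ▸ hc)⟩
  | cat p q =>
    subst huv
    have h1 : u ++ v ∈ (Pat.cat p (Pat.cat q P₂)).lang := by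
      show u ++ v ∈ p.lang * (q.lang * P₂.lang)
      rw [← mul_assoc]
      exact Language.mem_mul.mpr ⟨u, hu, v, hv, rfl⟩
    obtain ⟨w₁, rest, V₁, W, heq1, hcm1⟩ := exists_cmatch p (Pat.cat q P₂) (u ++ v) h1
    have hrest : rest ∈ (Pat.cat q P₂).lang := (cmatch_sound hcm1).2
    obtain ⟨w₂, w₃, V₂, V₃, heq2, hcm2⟩ := exists_cmatch q P₂ rest hrest
    refine ⟨w₁ ++ w₂, w₃, catA V₁ V₂, V₃, by rw [heq1, heq2, List.append_assoc], ?_⟩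
    exact CMatch.ccon (heq2 ▸ hcm1) hcm2
  | star q =>
    subst huv
    exact cmatch_star q P₂ (star_match q (fun y hy => exists_match q y hy))
      (fun y hy => exists_match P₂ y hy) (u ++ v)
      (Language.mem_mul.mpr ⟨u, hu, v, hv, rfl⟩)
termination_by (P₁.size + P₂.size, P₁.size)
decreasing_by all_goals (simp_wf; try subst_vars; rw [Prod.lex_iff]; simp only [Pat.size]; omega)

end

theorem match_ch_inv {A : Type} {a : A} {w : List A} {V : Assoc A}
    (h : Match w (Pat.ch a) V) : w = [a] ∧ V = single [a] := by
  cases h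
  exact ⟨rfl, rfl⟩

/-- For `P = σ · P₂`:
`type(1, P, C) = L(σ) ∩ (C / L(P₂))` and
`type(2n, P, C) = type(n, P₂, L(σ) \ C)`, where `C / K = {p | ∃ s ∈ K, ps ∈ C}`
is the right quotient and `K \ C = {s | ∃ p ∈ K, ps ∈ C}` the left quotient. -/
theorem typeOf_ch_cat {A : Type} (σ : A) (P₂ : Pat A) (C : Set (List A)) (n : Node) :
    typeOf [1] (Pat.cat (Pat.ch σ) P₂) C =
      {p : List A | p ∈ (Pat.ch σ).lang} ∩ {p | ∃ s ∈ P₂.lang, p ++ s ∈ C} ∧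
    typeOf (2 :: n) (Pat.cat (Pat.ch σ) P₂) C =
      typeOf n P₂ {s | ∃ p ∈ ((Pat.ch σ).lang : Set (List A)), p ++ s ∈ C} := by
  constructor
  · ext w
    simp only [typeOf, Set.mem_setOf_eq, Set.mem_inter_iff]
    constructor
    · rintro ⟨w', hw'C, V, hm, hV⟩
      cases hm with
      | celem hc =>
        cases hc with
        | clab h1 h2 =>
          obtain ⟨-, rfl⟩ := match_ch_inv h1
          have hV' : some [σ] = some w := hV
          obtain rfl : [σ] = w := Option.some.inj hV'
          refine ⟨rfl, ?_⟩
          exact ⟨_, match_sound h2, hw'C⟩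
    · rintro ⟨hσ, s, hs, hC⟩
      have hw : w = [σ] := hσ
      subst hw
      obtain ⟨V₂, h₂⟩ := exists_match P₂ s hs
      refine ⟨[σ] ++ s, hC, catA (single [σ]) V₂, ?_, ?_⟩
      · exact Match.celem (CMatch.clab (Match.lab σ) h₂)
      · exact rfl
  · ext w
    simp only [typeOf, Set.mem_setOf_eq]
    constructor
    · rintro ⟨w', hw'C, V, hm, hV⟩
      cases hm with
      | celem hc =>
        cases hc with
        | clab h1 h2 =>
          obtain ⟨-, rfl⟩ := match_ch_inv h1
          exact ⟨_, ⟨[σ], rfl, hw'C⟩, _, h2, hV⟩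
    · rintro ⟨s, ⟨p, hp, hpsC⟩, V₂, hm2, hV⟩
      have hpe : p = [σ] := hp
      subst hpe
      refine ⟨[σ] ++ s, hpsC, catA (single [σ]) V₂, ?_, ?_⟩
      · exact Match.celem (CMatch.clab (Match.lab σ) hm2)
      · exact hV
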